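/- Let E be a finite set, ℓ ≥ 1, γ ∈ (0,1], and g : 2^E → ℝ with g(∅) = 0. Let S ⊆ E × [ℓ] have pairwise distinct first coordinates, let (u,k) ∈ S, and let j ∈ [ℓ] with j ≠ k. Then (ℓ/γ)·(1 + γ³/ℓ)^{ℓ}·(Φ_g(S − (u,k) + (u,j)) − Φ_g(S)) = Σ_{J⊆[ℓ], j∈J, k∉J} α_{|J|}·(g(π_J(S) ∪ {u}) − g(π_J(S))) − Σ_{J⊆[ℓ], j∉J, k∈J} α_{|J|}·(g(π_J(S)) − g(π_J(S)∖{u})). -/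
import Mathlib


open Finset

/-- `π_J(S)`: first coordinates of pairs in `S` whose second coordinate lies in `J`. -/
def proj {E : Type*} [DecidableEq E] (S : Finset (E × ℕ)) (J : Finset ℕ) : Finset E :=
  (S.filter (fun p => p.2 ∈ J)).image Prod.fst

lemma mem_proj {E : Type*} [DecidableEq E] {S : Finset (E × ℕ)} {J : Finset ℕ} {x : E} :
    x ∈ proj S J ↔ ∃ m ∈ J, (x, m) ∈ S := by
  simp only [proj, Finset.mem_image, Finset.mem_filter]
  constructor
  · rintro ⟨⟨a, b⟩, ⟨hS, hJ⟩, rfl⟩; exact ⟨b, hJ, hS⟩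
  · rintro ⟨m, hJ, hS⟩; exact ⟨(x, m), ⟨hS, hJ⟩, rfl⟩

section aux
variable {E : Type*} [DecidableEq E] {S : Finset (E × ℕ)} {u : E} {k : ℕ}

lemma u_mem_proj (hdist : ∀ p ∈ S, ∀ q ∈ S, p.1 = q.1 → p = q) (huk : (u, k) ∈ S)
    {J : Finset ℕ} : u ∈ proj S J ↔ k ∈ J := by
  rw [mem_proj]
  constructor
  · rintro ⟨m, hm, hum⟩
    have := hdist _ hum _ huk rfl
    rw [Prod.mk.injEq] at this
    exact this.2 ▸ hm
  · exact fun h => ⟨k, h, huk⟩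

lemma proj_erase (hdist : ∀ p ∈ S, ∀ q ∈ S, p.1 = q.1 → p = q) (huk : (u, k) ∈ S)
    {J : Finset ℕ} : proj (S.erase (u, k)) J = (proj S J).erase u := by
  ext x
  simp only [mem_proj, Finset.mem_erase]
  constructor
  · rintro ⟨m, hm, hne, hxm⟩
    refine ⟨?_, m, hm, hxm⟩
    rintro rfl
    exact hne (hdist _ hxm _ huk rfl)
  · rintro ⟨hx, m, hm, hxm⟩
    exact ⟨m, hm, by simp [Prod.ext_iff, hx], hxm⟩

lemma proj_insert {j : ℕ} {J : Finset ℕ} {T : Finset (E × ℕ)} :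
    proj (insert (u, j) T) J = if j ∈ J then insert u (proj T J) else proj T J := by
  ext x
  by_cases hjJ : j ∈ J <;>
    simp only [mem_proj, Finset.mem_insert, hjJ, if_true, if_false, Prod.ext_iff] <;>
    constructor
  · rintro ⟨m, hm, (⟨rfl, rfl⟩ | h)⟩
    · exact Or.inl rfl
    · exact Or.inr ⟨m, hm, h⟩
  · rintro (rfl | ⟨m, hm, h⟩)
    · exact ⟨j, hjJ, Or.inl ⟨rfl, rfl⟩⟩
    · exact ⟨m, hm, Or.inr h⟩
  · rintro ⟨m, hm, (⟨rfl, rfl⟩ | h)⟩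
    · exact absurd hm hjJ
    · exact ⟨m, hm, h⟩
  · rintro ⟨m, hm, h⟩
    exact ⟨m, hm, Or.inr h⟩

end aux

/-- `α_i = (1+c)^(i-1) / C(ℓ-1, i-1)`. -/
noncomputable def alphaCoef (ℓ : ℕ) (c : ℝ) (i : ℕ) : ℝ :=
  (1 + c) ^ (i - 1) / ((ℓ - 1).choose (i - 1) : ℝ)

/-- The potential `Φ_g(S) = (γ/ℓ)(1+γ³/ℓ)^{-ℓ} Σ_{∅≠J⊆[ℓ]} α_{|J|} g(π_J(S))`. -/
noncomputable def Phi {E : Type*} [DecidableEq E] (ℓ : ℕ) (γ : ℝ) (g : Finset E → ℝ)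
    (S : Finset (E × ℕ)) : ℝ :=
  (γ / ℓ) * (1 + γ ^ 3 / ℓ) ^ (-(ℓ : ℤ)) *
    ∑ J ∈ (Finset.Icc 1 ℓ).powerset.filter (fun J => J.Nonempty),
      alphaCoef ℓ (γ ^ 3 / ℓ) J.card * g (proj S J)

theorem stmt_10 {E : Type*} [Fintype E] [DecidableEq E] (ℓ : ℕ) (hℓ : 1 ≤ ℓ)
    (γ : ℝ) (hγ0 : 0 < γ) (hγ1 : γ ≤ 1)
    (g : Finset E → ℝ) (hempty : g ∅ = 0)
    (S : Finset (E × ℕ)) (hS : ∀ p ∈ S, p.2 ∈ Finset.Icc 1 ℓ)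
    (hdist : ∀ p ∈ S, ∀ q ∈ S, p.1 = q.1 → p = q)
    (u : E) (k : ℕ) (huk : (u, k) ∈ S)
    (j : ℕ) (hj : j ∈ Finset.Icc 1 ℓ) (hjk : j ≠ k) :
    ((ℓ : ℝ) / γ) * (1 + γ ^ 3 / ℓ) ^ ℓ *
        (Phi ℓ γ g (insert (u, j) (S.erase (u, k))) - Phi ℓ γ g S) =
      (∑ J ∈ (Finset.Icc 1 ℓ).powerset.filter (fun J => j ∈ J ∧ k ∉ J),
          alphaCoef ℓ (γ ^ 3 / ℓ) J.card * (g (insert u (proj S J)) - g (proj S J))) -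
      (∑ J ∈ (Finset.Icc 1 ℓ).powerset.filter (fun J => j ∉ J ∧ k ∈ J),
          alphaCoef ℓ (γ ^ 3 / ℓ) J.card * (g (proj S J) - g ((proj S J).erase u))) := by
  have hk : k ∈ Finset.Icc 1 ℓ := hS _ huk
  set c : ℝ := γ ^ 3 / ℓ with hc
  have hℓ0 : (0:ℝ) < ℓ := by exact_mod_cast Nat.lt_of_lt_of_le Nat.zero_lt_one hℓ
  have hcpos : 0 < 1 + c := by positivity
  set T := (Finset.Icc 1 ℓ).powerset.filter (fun J => J.Nonempty) with hT
  set α := alphaCoef ℓ c with hα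
  -- rewrite the LHS scalar factor
  have key : ∀ J ∈ T, α J.card * g (proj (insert (u, j) (S.erase (u, k))) J)
      - α J.card * g (proj S J) =
      (if j ∈ J ∧ k ∉ J then α J.card * (g (insert u (proj S J)) - g (proj S J)) else 0)
      - (if j ∉ J ∧ k ∈ J then α J.card * (g (proj S J) - g ((proj S J).erase u)) else 0) := by
    intro J _
    rw [proj_insert, proj_erase hdist huk]
    by_cases hjJ : j ∈ J <;> by_cases hkJ : k ∈ J <;>
      simp only [hjJ, hkJ, if_true, if_false, not_true, not_false_iff, and_true, and_false,
        true_and, false_and]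
    · rw [Finset.insert_erase ((u_mem_proj hdist huk).2 hkJ)]; ring
    · rw [Finset.erase_eq_of_notMem (fun h => hkJ ((u_mem_proj hdist huk).1 h))]; ring
    · ring
    · rw [Finset.erase_eq_of_notMem (fun h => hkJ ((u_mem_proj hdist huk).1 h))]; ring
  have hsum : (∑ J ∈ T, α J.card * g (proj (insert (u, j) (S.erase (u, k))) J))
      - (∑ J ∈ T, α J.card * g (proj S J)) =
      (∑ J ∈ T.filter (fun J => j ∈ J ∧ k ∉ J),
          α J.card * (g (insert u (proj S J)) - g (proj S J))) -
      (∑ J ∈ T.filter (fun J => j ∉ J ∧ k ∈ J),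
          α J.card * (g (proj S J) - g ((proj S J).erase u))) := by
    rw [← Finset.sum_sub_distrib, Finset.sum_congr rfl key, Finset.sum_sub_distrib,
      ← Finset.sum_filter, ← Finset.sum_filter]
  have hTf1 : T.filter (fun J => j ∈ J ∧ k ∉ J)
      = (Finset.Icc 1 ℓ).powerset.filter (fun J => j ∈ J ∧ k ∉ J) := by
    rw [hT, Finset.filter_filter]
    refine Finset.filter_congr fun J _ => ?_
    exact ⟨fun h => h.2, fun h => ⟨⟨j, h.1⟩, h⟩⟩
  have hTf2 : T.filter (fun J => j ∉ J ∧ k ∈ J)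
      = (Finset.Icc 1 ℓ).powerset.filter (fun J => j ∉ J ∧ k ∈ J) := by
    rw [hT, Finset.filter_filter]
    refine Finset.filter_congr fun J _ => ?_
    exact ⟨fun h => h.2, fun h => ⟨⟨k, h.2⟩, h⟩⟩
  rw [hTf1, hTf2] at hsum
  rw [← hsum]
  simp only [Phi, ← hc, ← hα, ← hT]
  have hscal : ((ℓ : ℝ) / γ) * (1 + c) ^ ℓ * ((γ / ℓ) * (1 + c) ^ (-(ℓ : ℤ))) = 1 := by
    have h1 : (1 + c) ^ (ℓ : ℤ) * (1 + c) ^ (-(ℓ : ℤ)) = 1 := by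
      rw [← zpow_add₀ (ne_of_gt hcpos)]; simp
    rw [← zpow_natCast (1 + c) ℓ]
    calc ((ℓ : ℝ) / γ) * (1 + c) ^ (ℓ : ℤ) * ((γ / ℓ) * (1 + c) ^ (-(ℓ : ℤ)))
        = ((ℓ : ℝ) / γ * (γ / ℓ)) * ((1 + c) ^ (ℓ : ℤ) * (1 + c) ^ (-(ℓ : ℤ))) := by ring
      _ = 1 := by rw [h1, mul_one]; field_simp
  calc ((ℓ : ℝ) / γ) * (1 + c) ^ ℓ *
        ((γ / ℓ) * (1 + c) ^ (-(ℓ : ℤ)) * ∑ J ∈ T, α J.card * g (proj (insert (u, j) (S.erase (u, k))) J)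
          - (γ / ℓ) * (1 + c) ^ (-(ℓ : ℤ)) * ∑ J ∈ T, α J.card * g (proj S J))
      = (((ℓ : ℝ) / γ) * (1 + c) ^ ℓ * ((γ / ℓ) * (1 + c) ^ (-(ℓ : ℤ)))) *
        ((∑ J ∈ T, α J.card * g (proj (insert (u, j) (S.erase (u, k))) J))
          - ∑ J ∈ T, α J.card * g (proj S J)) := by ring
    _ = _ := by rw [hscal, one_mul]
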